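/- The PF-D0 coefficient function b4 satisfies lim_{v→0⁺} b4(v) = −67855831/2217600 and lim_{v→0⁺} (b4(v) − (−67855831/2217600))/v² = 16301796103/2421619200; in particular b4 tends to the corresponding coefficient of the classical Quinlan–Tremaine method as v → 0. -/

import Mathlib

/-!
Rewriting `sin (v/2)^10` as a combination of `cos (k v)`, `k ≤ 5`, puts numerator and denominator
of `b₄` in the form `∑ₖ (αₖ + βₖ v²) cos (k v)`, `k ≤ 6`. Replacing each `cos` by its Taylor
polynomial of degree 14 changes such a sum by `O(v¹⁶)`, and the resulting polynomials are computed
exactly: the numerator is `-67855831/44 · v¹² + O(v¹⁴)`, the denominator `50400 v¹² + O(v¹⁴)`,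
and the numerator minus `-67855831/2217600` times the denominator is
`16301796103/48048 · v¹⁴ + O(v¹⁶)`. Both limits are therefore ratios of leading coefficients.
-/

open Filter

/-- The variable coefficient `b₁(v)` of the phase-fitted method PF-D0. -/
noncomputable def pfb1 (v : ℝ) : ℝ :=
  (((-124184636) * Real.cos v + 70378348 * Real.cos (2 * v) - 24862148 * Real.cos (3 * v)
        + 5153611 * Real.cos (4 * v)) * v ^ 2
      + 25 * (3013169 * v ^ 2 - 16128 * Real.cos (3 * v) + 32256 * Real.cos (4 * v)
        - 32256 * Real.cos (5 * v) + 16128 * Real.cos (6 * v)))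
    / (206438400 * v ^ 2 * (Real.sin (v / 2)) ^ 10)

/-- The variable coefficient `b₂(v)` of the phase-fitted method PF-D0. -/
noncomputable def pfb2 (v : ℝ) : ℝ :=
  (v ^ 2 * (159588050 * Real.cos v - 85350160 * Real.cos (2 * v)
        + 16708985 * Real.cos (3 * v) - 5153611 * Real.cos (5 * v))
      - 16 * (6496079 * v ^ 2 - 252000 * Real.cos (3 * v) + 504000 * Real.cos (4 * v)
        - 504000 * Real.cos (5 * v) + 252000 * Real.cos (6 * v)))
    / (206438400 * v ^ 2 * (Real.sin (v / 2)) ^ 10)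

/-- The variable coefficient `b₃(v)` of the phase-fitted method PF-D0. -/
noncomputable def pfb3 (v : ℝ) : ℝ :=
  (((-367257540) * Real.cos v + 183567900 * Real.cos (2 * v)
        - 16708985 * Real.cos (4 * v) + 24862148 * Real.cos (5 * v)) * v ^ 2
      + 81 * (3175117 * v ^ 2 - 224000 * Real.cos (3 * v) + 448000 * Real.cos (4 * v)
        - 448000 * Real.cos (5 * v) + 224000 * Real.cos (6 * v)))
    / (206438400 * v ^ 2 * (Real.sin (v / 2)) ^ 10)

/-- The variable coefficient `b₄(v)` of the phase-fitted method PF-D0. -/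
noncomputable def pfb4 (v : ℝ) : ℝ :=
  (30675810 * v ^ 2 * Real.cos v - 42958788 * v ^ 2
      + 75 * (161280 - 611893 * v ^ 2) * Real.cos (3 * v)
      + 140 * (152411 * v ^ 2 - 172800) * Real.cos (4 * v)
      + (24192000 - 17594587 * v ^ 2) * Real.cos (5 * v)
      - 12096000 * Real.cos (6 * v))
    / (51609600 * v ^ 2 * (Real.sin (v / 2)) ^ 10)

/-- The variable coefficient `b₅(v)` of the phase-fitted method PF-D0. -/
noncomputable def pfb5 (v : ℝ) : ℝ :=
  ((-61351620) * v ^ 2 * Real.cos (2 * v) + 85936557 * v ^ 2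
      + 30 * (6120959 * v ^ 2 - 1411200) * Real.cos (3 * v)
      + 25 * (3386880 - 3191761 * v ^ 2) * Real.cos (4 * v)
      + (62092318 * v ^ 2 - 84672000) * Real.cos (5 * v)
      + 42336000 * Real.cos (6 * v))
    / (103219200 * v ^ 2 * (Real.sin (v / 2)) ^ 10)

/-- The variable coefficient `b₆(v)` of the phase-fitted method PF-D0. -/
noncomputable def pfb6 (v : ℝ) : ℝ :=
  (((-171873114) * Real.cos v + 171835152 * Real.cos (2 * v)
        - 257184477 * Real.cos (3 * v) + 103937264 * Real.cos (4 * v)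
        - 75329225 * Real.cos (5 * v)) * v ^ 2
      + 50803200 * (Real.cos (3 * v) - 2 * Real.cos (4 * v)
        + 2 * Real.cos (5 * v) - Real.cos (6 * v)))
    / (103219200 * v ^ 2 * (Real.sin (v / 2)) ^ 10)

open Asymptotics Topology

noncomputable def cosTaylor (x : ℝ) : ℝ :=
  1 - x ^ 2 / 2 + x ^ 4 / 24 - x ^ 6 / 720 + x ^ 8 / 40320 - x ^ 10 / 3628800
    + x ^ 12 / 479001600 - x ^ 14 / 87178291200

open Complex Finset in
theorem abs_cos_sub_cosTaylor_le {x : ℝ} (hx : |x| ≤ 1) :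
    |Real.cos x - cosTaylor x| ≤ |x| ^ 16 :=
  calc |Real.cos x - cosTaylor x| = ‖cos x - (cosTaylor x : ℂ)‖ := by
        rw [← ofReal_cos, ← ofReal_sub, norm_real, Real.norm_eq_abs]
    _ = ‖(exp (-x * I) - ∑ m ∈ range 16, (-x * I) ^ m / m.factorial) / 2 +
         (exp (x * I) - ∑ m ∈ range 16, (x * I) ^ m / m.factorial) / 2‖ := by
      congr 1
      simp [cos, cosTaylor, field, sum_range_succ, Nat.factorial]
      grind [I_sq]
    _ ≤ ‖exp (-x * I) - ∑ m ∈ range 16, (-x * I) ^ m / m.factorial‖ / 2 +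
        ‖exp (x * I) - ∑ m ∈ range 16, (x * I) ^ m / m.factorial‖ / 2 := by
      grw [norm_add_le]
      simp
    _ ≤ ‖-x * I‖ ^ 16 * (Nat.succ 16 * (Nat.factorial 16 * (16 : ℕ) : ℝ)⁻¹) / 2 +
        ‖x * I‖ ^ 16 * (Nat.succ 16 * (Nat.factorial 16 * (16 : ℕ) : ℝ)⁻¹) / 2 := by
      grw [exp_bound (by simpa) (by simp), exp_bound (by simpa) (by simp)]
    _ ≤ |x| ^ 16 := by
      have : 0 ≤ |x| ^ 16 := by positivity
      norm_num [Nat.factorial]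
      linarith

theorem isBigO_cos_mul_sub_cosTaylor (k : ℝ) :
    (fun v => Real.cos (k * v) - cosTaylor (k * v)) =O[𝓝 0] (· ^ 16) := by
  have hcos : (fun x => Real.cos x - cosTaylor x) =O[𝓝 0] (· ^ 16) := by
    refine IsBigO.of_bound 1 ?_
    filter_upwards [Metric.closedBall_mem_nhds (0 : ℝ) one_pos] with x hx
    simpa [Real.dist_eq] using abs_cos_sub_cosTaylor_le (by simpa [Real.dist_eq] using hx)
  have hk : Tendsto (fun v : ℝ => k * v) (𝓝 0) (𝓝 0) := by
    simpa using (continuous_const_mul k).tendsto 0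
  refine (hcos.comp_tendsto hk).trans ?_
  simpa [Function.comp_def, mul_pow] using
    (isBigO_refl (· ^ 16 : ℝ → ℝ) (𝓝 0)).const_mul_left (k ^ 16)

noncomputable def trigPoly {n : ℕ} (α β : Fin n → ℝ) (v : ℝ) : ℝ :=
  ∑ k, (α k + β k * v ^ 2) * Real.cos (k * v)

noncomputable def trigPolyTaylor {n : ℕ} (α β : Fin n → ℝ) (v : ℝ) : ℝ :=
  ∑ k, (α k + β k * v ^ 2) * cosTaylor (k * v)

theorem trigPoly_sub_const_mul {n : ℕ} (α β β' : Fin n → ℝ) (c v : ℝ) :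
    trigPoly α β v - c * trigPoly 0 β' v = trigPoly α (β - c • β') v := by
  simp only [trigPoly, Finset.mul_sum, ← Finset.sum_sub_distrib]
  refine Finset.sum_congr rfl fun k _ => ?_
  simp only [Pi.zero_apply, Pi.sub_apply, Pi.smul_apply, smul_eq_mul]
  ring

theorem isBigO_trigPoly_sub_trigPolyTaylor {n : ℕ} (α β : Fin n → ℝ) :
    (fun v => trigPoly α β v - trigPolyTaylor α β v) =O[𝓝 0] (· ^ 16) := by
  simp only [trigPoly, trigPolyTaylor, ← Finset.sum_sub_distrib, ← mul_sub]
  refine IsBigO.fun_sum fun k _ => ?_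
  have hcoeff : Tendsto (fun v : ℝ => α k + β k * v ^ 2) (𝓝 0) (𝓝 (α k + β k * 0 ^ 2)) :=
    (by fun_prop : Continuous fun v : ℝ => α k + β k * v ^ 2).tendsto 0
  simpa using (hcoeff.isBigO_one ℝ).mul (isBigO_cos_mul_sub_cosTaylor (k : ℝ))

theorem tendsto_trigPoly_div_pow {n m : ℕ} {α β : Fin n → ℝ} {a : ℝ} (hm : m < 16)
    (p : ℝ → ℝ) (hp : ContinuousAt p 0)
    (hT : ∀ v, trigPolyTaylor α β v = a * v ^ m + v ^ (m + 1) * p v) :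
    Tendsto (fun v => trigPoly α β v / v ^ m) (𝓝[≠] 0) (𝓝 a) := by
  have hrem : Tendsto (fun v => (trigPoly α β v - trigPolyTaylor α β v) / v ^ m) (𝓝 0) (𝓝 0) :=
    ((isBigO_trigPoly_sub_trigPolyTaylor α β).trans_isLittleO
      (isLittleO_pow_pow hm)).tendsto_div_nhds_zero
  have htail : Tendsto (fun v => v * p v) (𝓝 0) (𝓝 0) := by
    simpa using (show ContinuousAt (fun v => v * p v) 0 by fun_prop).tendsto
  have hsum := ((hrem.add htail).const_add a).mono_left (nhdsWithin_le_nhds (s := {0}ᶜ))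
  rw [add_zero, add_zero] at hsum
  refine hsum.congr' ?_
  filter_upwards [self_mem_nhdsWithin] with v (hv : v ≠ 0)
  rw [hT]
  field_simp
  ring

theorem sin_half_pow_ten (x : ℝ) :
    Real.sin (x / 2) ^ 10 = (126 - 210 * Real.cos x + 120 * Real.cos (2 * x)
      - 45 * Real.cos (3 * x) + 10 * Real.cos (4 * x) - Real.cos (5 * x)) / 512 := by
  have h2 := Real.cos_two_mul x
  have h3 := Real.cos_three_mul x
  have h4 : Real.cos (4 * x) = 2 * Real.cos x * Real.cos (3 * x) - Real.cos (2 * x) := by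
    have := Real.cos_add_cos (4 * x) (2 * x)
    rw [show (4 * x + 2 * x) / 2 = 3 * x by ring, show (4 * x - 2 * x) / 2 = x by ring] at this
    linarith
  have h5 : Real.cos (5 * x) = 2 * Real.cos x * Real.cos (4 * x) - Real.cos (3 * x) := by
    have := Real.cos_add_cos (5 * x) (3 * x)
    rw [show (5 * x + 3 * x) / 2 = 4 * x by ring, show (5 * x - 3 * x) / 2 = x by ring] at this
    linarith
  have hsin : Real.sin (x / 2) ^ 2 = (1 - Real.cos x) / 2 := by
    rw [Real.sin_sq, Real.cos_sq, show 2 * (x / 2) = x by ring]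
    ring
  rw [show Real.sin (x / 2) ^ 10 = (Real.sin (x / 2) ^ 2) ^ 5 by ring, hsin, h5, h4, h3, h2]
  ring

def pfb4NumConst : Fin 7 → ℝ := ![0, 0, 0, 12096000, -24192000, 24192000, -12096000]

def pfb4NumQuad : Fin 7 → ℝ := ![-42958788, 30675810, 0, -45891975, 21337540, -17594587, 0]

def pfb4DenQuad : Fin 7 → ℝ := ![12700800, -21168000, 12096000, -4536000, 1008000, -100800, 0]

theorem pfb4_eq_div (v : ℝ) :
    pfb4 v = trigPoly pfb4NumConst pfb4NumQuad v / trigPoly 0 pfb4DenQuad v := by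
  rw [pfb4, sin_half_pow_ten]
  congr 1 <;>
  · simp only [trigPoly, pfb4NumConst, pfb4NumQuad, pfb4DenQuad, Pi.zero_apply,
      Fin.sum_univ_seven, Matrix.cons_val, Fin.isValue, Fin.coe_ofNat_eq_mod, Nat.reduceMod,
      Nat.cast_ofNat, Nat.cast_zero, Nat.cast_one, zero_mul, one_mul, Real.cos_zero]
    ring

theorem tendsto_pfb4Num_div :
    Tendsto (fun v => trigPoly pfb4NumConst pfb4NumQuad v / v ^ 12) (𝓝[≠] 0)
      (𝓝 (-67855831 / 44)) :=
  tendsto_trigPoly_div_pow (by norm_num)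
    (fun v => 1965674967 / 2002 * v + 30627881269 / 26208 * v ^ 3) (by fun_prop) fun v => by
      simp only [trigPolyTaylor, pfb4NumConst, pfb4NumQuad, cosTaylor,
        Fin.sum_univ_seven, Matrix.cons_val, Fin.isValue, Fin.coe_ofNat_eq_mod, Nat.reduceMod,
        Nat.cast_ofNat, Nat.cast_zero, Nat.cast_one]
      ring

theorem tendsto_pfb4Den_div :
    Tendsto (fun v => trigPoly 0 pfb4DenQuad v / v ^ 12) (𝓝[≠] 0) (𝓝 50400) :=
  tendsto_trigPoly_div_pow (by norm_num)
    (fun v => -21000 * v + 4200 * v ^ 3) (by fun_prop) fun v => by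
      simp only [trigPolyTaylor, pfb4DenQuad, Pi.zero_apply, cosTaylor,
        Fin.sum_univ_seven, Matrix.cons_val, Fin.isValue, Fin.coe_ofNat_eq_mod, Nat.reduceMod,
        Nat.cast_ofNat, Nat.cast_zero, Nat.cast_one]
      ring

theorem tendsto_pfb4Num_sub_mul_Den_div :
    Tendsto (fun v => trigPoly pfb4NumConst
        (pfb4NumQuad - (-67855831 / 2217600 : ℝ) • pfb4DenQuad) v / v ^ 14) (𝓝[≠] 0)
      (𝓝 (16301796103 / 48048)) :=
  tendsto_trigPoly_div_pow (by norm_num)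
    (fun v => 373955977685 / 288288 * v) (by fun_prop) fun v => by
      simp only [trigPolyTaylor, pfb4NumConst, pfb4NumQuad, pfb4DenQuad, Pi.sub_apply,
        Pi.smul_apply, smul_eq_mul, cosTaylor,
        Fin.sum_univ_seven, Matrix.cons_val, Fin.isValue, Fin.coe_ofNat_eq_mod, Nat.reduceMod,
        Nat.cast_ofNat, Nat.cast_zero, Nat.cast_one]
      ring

/-- The PF-D0 coefficient `pfb4` tends to the corresponding classical
Quinlan–Tremaine coefficient as `v → 0⁺`, with the stated `v²`-Taylor coefficient. -/
theorem pfd0_b4_limit :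
    Tendsto pfb4 (nhdsWithin 0 (Set.Ioi 0)) (nhds (-67855831 / 2217600)) ∧
    Tendsto (fun v : ℝ => (pfb4 v - (-67855831 / 2217600)) / v ^ 2)
      (nhdsWithin 0 (Set.Ioi 0)) (nhds (16301796103 / 2421619200)) := by
  have hpos : 𝓝[>] (0 : ℝ) ≤ 𝓝[≠] 0 := nhdsWithin_mono _ fun v (hv : 0 < v) => hv.ne'
  have hv : ∀ᶠ v : ℝ in 𝓝[≠] 0, v ≠ 0 := self_mem_nhdsWithin
  have hden : ∀ᶠ v in 𝓝[≠] 0, trigPoly 0 pfb4DenQuad v ≠ 0 := by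
    filter_upwards [tendsto_pfb4Den_div.eventually_ne (by norm_num : (50400 : ℝ) ≠ 0)]
      with v hquot hzero using hquot (by rw [hzero, zero_div])
  constructor
  · have h := tendsto_pfb4Num_div.div tendsto_pfb4Den_div (by norm_num)
    rw [show (-67855831 / 44 / 50400 : ℝ) = -67855831 / 2217600 by norm_num] at h
    refine (h.congr' ?_).mono_left hpos
    filter_upwards [hv] with v hv
    rw [Pi.div_apply, pfb4_eq_div, div_div_div_cancel_right₀ (pow_ne_zero 12 hv)]
  · have h := tendsto_pfb4Num_sub_mul_Den_div.div tendsto_pfb4Den_div (by norm_num)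
    rw [show (16301796103 / 48048 / 50400 : ℝ) = 16301796103 / 2421619200 by norm_num] at h
    refine (h.congr' ?_).mono_left hpos
    filter_upwards [hv, hden] with v hv hden
    simp only [Pi.div_apply, pfb4_eq_div, ← trigPoly_sub_const_mul]
    field_simp
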